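/- The MLE of the covariance matrix: for f(R) = det^{-n}(R) exp(−Tr[R^{-1} S]) with S Hermitian positive definite and n > 0, the unique maximizer over Hermitian positive definite R is R̂ = S/n, and the maximum value is det^{-n}(S/n) e^{-nm}. -/

import Mathlib

open Matrix
open scoped ComplexOrder

/-!
Write `S = Q²` with `Q = S^{1/2}` positive definite and put `T = Q R⁻¹ Q`. Then
`f R = det⁻ⁿ S · det(T)ⁿ e^{-Tr T}`, and in terms of the eigenvalues `λᵢ > 0` of `T` the last
factor is `∏ᵢ λᵢⁿ e^{-λᵢ}`. Each factor is at most `nⁿ e^{-n}` (this is `log x ≤ x - 1` at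
`x = λ/n`), with equality only at `λ = n`. So `f` is maximal exactly when `T = n • 1`, i.e. when
`R = S / n`.
-/

namespace Real

lemma rpow_mul_exp_neg_lt {a x : ℝ} (ha : 0 < a) (hx : 0 < x) (hxa : x ≠ a) :
    x ^ a * exp (-x) < a ^ a * exp (-a) := by
  have hlog : log (x / a) < x / a - 1 :=
    log_lt_sub_one_of_pos (div_pos hx ha) (by rwa [ne_eq, div_eq_one_iff_eq ha.ne'])
  rw [log_div hx.ne' ha.ne'] at hlog
  rw [rpow_def_of_pos hx, rpow_def_of_pos ha, ← exp_add, ← exp_add, exp_lt_exp]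
  have hscale : a * (x / a - 1) = x - a := by field_simp
  linarith [mul_lt_mul_of_pos_left hlog ha]

lemma rpow_mul_exp_neg_le {a x : ℝ} (ha : 0 < a) (hx : 0 < x) :
    x ^ a * exp (-x) ≤ a ^ a * exp (-a) := by
  rcases eq_or_ne x a with rfl | hxa
  · rfl
  · exact (rpow_mul_exp_neg_lt ha hx hxa).le

end Real

namespace Matrix

section Field

variable {ι K : Type*} [Fintype ι] [DecidableEq ι] [Field K]

lemma inv_smul₀ {A : Matrix ι ι K} (hA : IsUnit A.det) {c : K} (hc : c ≠ 0) :
    (c • A)⁻¹ = c⁻¹ • A⁻¹ :=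
  inv_eq_left_inv <| by rw [smul_mul_smul_comm, inv_mul_cancel₀ hc, nonsing_inv_mul _ hA, one_smul]

lemma mul_inv_mul_inv_smul_of_mul_self_eq {Q S : Matrix ι ι K} (hQ : IsUnit Q.det)
    (hQS : Q * Q = S) {c : K} (hc : c ≠ 0) : Q * (c⁻¹ • S)⁻¹ * Q = c • 1 := by
  subst hQS
  rw [inv_smul₀ (by rw [det_mul]; exact hQ.mul hQ) (inv_ne_zero hc), inv_inv, mul_smul_comm,
    smul_mul_assoc, Matrix.mul_inv_rev, ← mul_assoc, mul_nonsing_inv _ hQ, one_mul,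
    nonsing_inv_mul _ hQ]

end Field

lemma PosDef.inv_ofReal_smul {ι 𝕜 : Type*} [RCLike 𝕜] {S : Matrix ι ι 𝕜} (hS : S.PosDef) {a : ℝ}
    (ha : 0 < a) : ((a : 𝕜)⁻¹ • S).PosDef :=
  hS.smul (inv_pos.mpr (RCLike.ofReal_pos.mpr ha))

variable {ι 𝕜 : Type*} [Fintype ι] [DecidableEq ι] [RCLike 𝕜]

lemma IsHermitian.eq_smul_one_of_eigenvalues_eq {A : Matrix ι ι 𝕜} (hA : A.IsHermitian) {c : ℝ}
    (h : ∀ i, hA.eigenvalues i = c) : A = (c : 𝕜) • 1 := by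
  have hdiag : diagonal (RCLike.ofReal ∘ hA.eigenvalues) = algebraMap 𝕜 (Matrix ι ι 𝕜) c := by
    rw [algebraMap_eq_diagonal]; congr 1; ext i; simp [h i]
  rw [hA.spectral_theorem, hdiag, AlgHomClass.commutes, Algebra.algebraMap_eq_smul_one]

namespace PosDef

variable {A : Matrix ι ι 𝕜}

lemma isUnit_det (hA : A.PosDef) : IsUnit A.det :=
  hA.det_pos.ne'.isUnit

lemma re_det_pos (hA : A.PosDef) : 0 < RCLike.re A.det :=
  (RCLike.pos_iff.mp hA.det_pos).1

lemma ofReal_re_det (hA : A.PosDef) : ((RCLike.re A.det : ℝ) : 𝕜) = A.det := by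
  obtain ⟨x, -, hx⟩ := RCLike.pos_iff_exists_ofReal.mp hA.det_pos
  rw [← hx, RCLike.ofReal_re]

open scoped MatrixOrder in
lemma exists_posDef_mul_self_eq (hA : A.PosDef) : ∃ Q : Matrix ι ι 𝕜, Q.PosDef ∧ Q * Q = A :=
  ⟨CFC.sqrt A, hA.isStrictlyPositive.sqrt.posDef, CFC.sqrt_mul_sqrt_self A hA.posSemidef.nonneg⟩

lemma mul_mul_same {Q : Matrix ι ι 𝕜} (hA : A.PosDef) (hQ : Q.PosDef) : (Q * A * Q).PosDef := by
  simpa [hQ.isHermitian.eq] using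
    hA.conjTranspose_mul_mul_same (mulVec_injective_iff_isUnit.mpr hQ.isUnit)

end PosDef

noncomputable def detRpowMulExpNegTrace (a : ℝ) (T : Matrix ι ι 𝕜) : ℝ :=
  RCLike.re T.det ^ a * Real.exp (-RCLike.re T.trace)

lemma detRpowMulExpNegTrace_smul_one {a : ℝ} (ha : 0 ≤ a) :
    detRpowMulExpNegTrace a ((a : 𝕜) • (1 : Matrix ι ι 𝕜)) =
      (a ^ a * Real.exp (-a)) ^ Fintype.card ι := by
  rw [detRpowMulExpNegTrace, det_smul, det_one, mul_one, trace_smul, trace_one, smul_eq_mul,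
    ← RCLike.ofReal_pow, RCLike.ofReal_re, ← Real.rpow_natCast, ← Real.rpow_mul ha,
    mul_comm (Fintype.card ι : ℝ) a, Real.rpow_mul ha, Real.rpow_natCast, ← RCLike.ofReal_natCast,
    ← RCLike.ofReal_mul, RCLike.ofReal_re, mul_pow, ← Real.exp_nat_mul]
  ring_nf

namespace PosDef

variable {T : Matrix ι ι 𝕜} {a : ℝ}

lemma detRpowMulExpNegTrace_eq_prod (hT : T.PosDef) :
    detRpowMulExpNegTrace a T =
      ∏ i, hT.isHermitian.eigenvalues i ^ a * Real.exp (-hT.isHermitian.eigenvalues i) := by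
  rw [detRpowMulExpNegTrace, hT.isHermitian.det_eq_prod_eigenvalues,
    hT.isHermitian.trace_eq_sum_eigenvalues, ← RCLike.ofReal_prod, ← RCLike.ofReal_sum,
    RCLike.ofReal_re, RCLike.ofReal_re, ← Finset.sum_neg_distrib, Real.exp_sum,
    ← Real.finsetProd_rpow _ _ fun i _ ↦ (hT.eigenvalues_pos i).le, Finset.prod_mul_distrib]

lemma detRpowMulExpNegTrace_le (hT : T.PosDef) (ha : 0 < a) :
    detRpowMulExpNegTrace a T ≤ (a ^ a * Real.exp (-a)) ^ Fintype.card ι := by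
  rw [hT.detRpowMulExpNegTrace_eq_prod, ← Finset.card_univ, ← Finset.prod_const]
  exact Finset.prod_le_prod
    (fun i _ ↦ (mul_pos (Real.rpow_pos_of_pos (hT.eigenvalues_pos i) a) (Real.exp_pos _)).le)
    fun i _ ↦ Real.rpow_mul_exp_neg_le ha (hT.eigenvalues_pos i)

lemma detRpowMulExpNegTrace_eq_iff (hT : T.PosDef) (ha : 0 < a) :
    detRpowMulExpNegTrace a T = (a ^ a * Real.exp (-a)) ^ Fintype.card ι ↔ T = (a : 𝕜) • 1 := by
  refine ⟨fun h ↦ hT.isHermitian.eq_smul_one_of_eigenvalues_eq fun i ↦ ?_, ?_⟩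
  · by_contra hi
    rw [hT.detRpowMulExpNegTrace_eq_prod, ← Finset.card_univ, ← Finset.prod_const] at h
    refine h.not_lt (Finset.prod_lt_prod
      (fun j _ ↦ mul_pos (Real.rpow_pos_of_pos (hT.eigenvalues_pos j) a) (Real.exp_pos _))
      (fun j _ ↦ Real.rpow_mul_exp_neg_le ha (hT.eigenvalues_pos j)) ⟨i, Finset.mem_univ i, ?_⟩)
    exact Real.rpow_mul_exp_neg_lt ha (hT.eigenvalues_pos i) hi
  · rintro rfl
    exact detRpowMulExpNegTrace_smul_one ha.le

end PosDef

noncomputable def covarianceLikelihood (a : ℝ) (S R : Matrix ι ι 𝕜) : ℝ :=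
  RCLike.re R.det ^ (-a) * Real.exp (-RCLike.re (R⁻¹ * S).trace)

variable {a : ℝ} {S R : Matrix ι ι 𝕜}

lemma covarianceLikelihood_eq {Q : Matrix ι ι 𝕜} (hS : S.PosDef) (hQ : Q.PosDef)
    (hQS : Q * Q = S) (hR : R.PosDef) :
    covarianceLikelihood a S R =
      RCLike.re S.det ^ (-a) * detRpowMulExpNegTrace a (Q * R⁻¹ * Q) := by
  have htrace : (Q * R⁻¹ * Q).trace = (R⁻¹ * S).trace := by
    rw [trace_mul_cycle, trace_mul_comm, hQS]
  have hdet : RCLike.re (Q * R⁻¹ * Q).det = RCLike.re S.det / RCLike.re R.det := by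
    apply RCLike.ofReal_injective (K := 𝕜)
    rw [(hR.inv.mul_mul_same hQ).ofReal_re_det, RCLike.ofReal_div, hS.ofReal_re_det,
      hR.ofReal_re_det, ← hQS, det_mul, det_mul, det_mul, det_nonsing_inv, Ring.inverse_eq_inv',
      div_eq_mul_inv]
    ring
  rw [covarianceLikelihood, detRpowMulExpNegTrace, hdet, htrace, ← mul_assoc,
    Real.div_rpow hS.re_det_pos.le hR.re_det_pos.le, Real.rpow_neg hS.re_det_pos.le,
    Real.rpow_neg hR.re_det_pos.le]
  have := (Real.rpow_pos_of_pos hS.re_det_pos a).ne'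
  field_simp

lemma covarianceLikelihood_inv_smul_self (hS : IsUnit S.det) (ha : a ≠ 0) :
    covarianceLikelihood a S ((a : 𝕜)⁻¹ • S) =
      RCLike.re ((a : 𝕜)⁻¹ • S).det ^ (-a) * Real.exp (-(a * Fintype.card ι)) := by
  rw [covarianceLikelihood, inv_smul₀ hS (inv_ne_zero (RCLike.ofReal_ne_zero.mpr ha)), inv_inv,
    smul_mul_assoc, nonsing_inv_mul _ hS, trace_smul, trace_one, smul_eq_mul,
    ← RCLike.ofReal_natCast, ← RCLike.ofReal_mul, RCLike.ofReal_re]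

lemma covarianceLikelihood_le (hS : S.PosDef) (ha : 0 < a) (hR : R.PosDef) :
    covarianceLikelihood a S R ≤ covarianceLikelihood a S ((a : 𝕜)⁻¹ • S) := by
  obtain ⟨Q, hQ, hQS⟩ := hS.exists_posDef_mul_self_eq
  rw [covarianceLikelihood_eq hS hQ hQS hR, covarianceLikelihood_eq hS hQ hQS (hS.inv_ofReal_smul ha),
    mul_inv_mul_inv_smul_of_mul_self_eq hQ.isUnit_det hQS (RCLike.ofReal_ne_zero.mpr ha.ne'),
    detRpowMulExpNegTrace_smul_one ha.le]
  exact mul_le_mul_of_nonneg_left ((hR.inv.mul_mul_same hQ).detRpowMulExpNegTrace_le ha)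
    (Real.rpow_nonneg hS.re_det_pos.le _)

lemma covarianceLikelihood_eq_iff (hS : S.PosDef) (ha : 0 < a) (hR : R.PosDef) :
    covarianceLikelihood a S R = covarianceLikelihood a S ((a : 𝕜)⁻¹ • S) ↔
      R = (a : 𝕜)⁻¹ • S := by
  refine ⟨fun h ↦ ?_, fun h ↦ h ▸ rfl⟩
  obtain ⟨Q, hQ, hQS⟩ := hS.exists_posDef_mul_self_eq
  have hmle := mul_inv_mul_inv_smul_of_mul_self_eq hQ.isUnit_det hQS
    (RCLike.ofReal_ne_zero.mpr ha.ne')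
  rw [covarianceLikelihood_eq hS hQ hQS hR, covarianceLikelihood_eq hS hQ hQS (hS.inv_ofReal_smul ha),
    hmle, detRpowMulExpNegTrace_smul_one ha.le,
    mul_right_inj' (Real.rpow_pos_of_pos hS.re_det_pos _).ne',
    (hR.inv.mul_mul_same hQ).detRpowMulExpNegTrace_eq_iff ha, ← hmle] at h
  exact inv_inj (hQ.isUnit.mul_left_cancel (hQ.isUnit.mul_right_cancel h)) hR.isUnit_det

end Matrix

/-- the MLE of the covariance matrix. The unique maximizer of
`f(R) = det⁻ⁿ(R) exp(-Tr[R⁻¹S])` over Hermitian positive definite `R` is `R̂ = S/n`,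
with maximum value `det⁻ⁿ(S/n) e^{-nm}`. -/
theorem stmt8 {m : ℕ} (S : Matrix (Fin m) (Fin m) ℂ) (hS : S.PosDef)
    (n : ℝ) (hn : 0 < n)
    (f : Matrix (Fin m) (Fin m) ℂ → ℝ)
    (hf : ∀ R : Matrix (Fin m) (Fin m) ℂ,
      f R = (R.det.re) ^ (-n) * Real.exp (-(trace (R⁻¹ * S)).re))
    (Rhat : Matrix (Fin m) (Fin m) ℂ) (hRhat : Rhat = ((n : ℂ))⁻¹ • S) :
    (∀ R : Matrix (Fin m) (Fin m) ℂ, R.PosDef → f R ≤ f Rhat) ∧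
    (∀ R : Matrix (Fin m) (Fin m) ℂ, R.PosDef → f R = f Rhat → R = Rhat) ∧
    f Rhat = (Rhat.det.re) ^ (-n) * Real.exp (-(n * m)) := by
  obtain rfl : f = covarianceLikelihood n S := funext hf
  subst hRhat
  refine ⟨fun R hR ↦ covarianceLikelihood_le hS hn hR,
    fun R hR ↦ (covarianceLikelihood_eq_iff hS hn hR).mp, ?_⟩
  simpa using covarianceLikelihood_inv_smul_self hS.isUnit_det hn.ne'
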